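/- arXiv:2310.17053 — 5 statements merged into one kernel-verified Lean document; each statement's English description precedes it below -/
import Mathlib

section
/- Let u, u₁, u₂, u₃ ∈ ℝ with u₁ ≠ 0, let σ = sign(u₁), and define γ = u₂/(2|u₁|^{3/2}) and δ = (2u₁² − u·u₂)/(2|u₁|^{3/2}). Then u₃/(γu + δ)² − 6γ·u₁·u₂/(γu + δ)³ + 6γ²·u₁³/(γu + δ)⁴ = σ·(u₃/u₁ − (3/2)·(u₂/u₁)²). (The invariantization of the third-order derivative coordinate under the SL(2,ℝ) moving frame equals σ times the Schwarzian expression.) -/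
/-- The invariantization of the third-order derivative coordinate under the
SL(2,ℝ) moving frame equals σ times the Schwarzian expression. -/
theorem invariantization_third_derivative
    (u u₁ u₂ u₃ : ℝ) (hu₁ : u₁ ≠ 0)
    (σ γ δ : ℝ)
    (hσ : σ = Real.sign u₁)
    (hγ : γ = u₂ / (2 * |u₁| ^ ((3 : ℝ) / 2)))
    (hδ : δ = (2 * u₁ ^ 2 - u * u₂) / (2 * |u₁| ^ ((3 : ℝ) / 2))) :
    u₃ / (γ * u + δ) ^ 2 - 6 * γ * u₁ * u₂ / (γ * u + δ) ^ 3
        + 6 * γ ^ 2 * u₁ ^ 3 / (γ * u + δ) ^ 4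
      = σ * (u₃ / u₁ - (3 / 2) * (u₂ / u₁) ^ 2) := by
  set a : ℝ := |u₁| with ha
  have ha0 : 0 < a := abs_pos.mpr hu₁
  set b : ℝ := Real.sqrt a with hb
  have hb0 : 0 < b := Real.sqrt_pos.mpr ha0
  have hb2 : b ^ 2 = a := Real.sq_sqrt ha0.le
  have hA3 : a ^ ((3 : ℝ) / 2) = b ^ 3 := by
    rw [hb, Real.sqrt_eq_rpow, ← Real.rpow_natCast (a ^ ((1:ℝ)/2)) 3,
      ← Real.rpow_mul ha0.le]
    norm_num
  rw [hA3] at hγ hδ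
  have hb0' : b ≠ 0 := hb0.ne'
  rcases lt_or_gt_of_ne hu₁ with h | h
  · have hσ1 : σ = -1 := by rw [hσ, Real.sign_of_neg h]
    have hu : u₁ = -b ^ 2 := by
      rw [hb2, ha, abs_of_neg h]; ring
    have hsum : γ * u + δ = b := by
      rw [hγ, hδ, hu]; field_simp; ring
    rw [hsum, hγ, hσ1, hu]
    field_simp
    ring
  · have hσ1 : σ = 1 := by rw [hσ, Real.sign_of_pos h]
    have hu : u₁ = b ^ 2 := by rw [hb2, ha, abs_of_pos h]
    have hsum : γ * u + δ = b := by
      rw [hγ, hδ, hu]; field_simp; ring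
    rw [hsum, hγ, hσ1, hu]
    field_simp
    ring
end

section
/- Let F : ℝ → ℝ be continuous and let β, δ : ℝ → ℝ be twice differentiable functions on an open interval J satisfying β''(t) = −(F(t)/2)·β(t), δ''(t) = −(F(t)/2)·δ(t), β'(t)δ(t) − β(t)δ'(t) = 1, and δ(t) ≠ 0 for all t ∈ J. Then u = β/δ is three times differentiable on J, u'(t) = 1/δ(t)² > 0, and u satisfies Schwarz' equation u'''(t)/u'(t) − (3/2)·(u''(t)/u'(t))² = F(t) for all t ∈ J. (Reconstruction of the solution of Schwarz' equation from the left moving frame.) -/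
/-!
If `u = β / δ` with unit Wronskian `β' δ - β δ' = 1`, then `u' = δ⁻²`. For any `u` with
`u' = g⁻²` a direct computation gives the classical identity `S[u] = -2 g'' / g`, and the
frame equation `δ'' = -(F/2) δ` turns the right-hand side into `F`.
-/

open Filter Topology

noncomputable def schwarzian (u : ℝ → ℝ) (t : ℝ) : ℝ :=
  deriv (deriv (deriv u)) t / deriv u t - (3 / 2) * (deriv (deriv u) t / deriv u t) ^ 2

lemma hasDerivAt_div_of_wronskian_eq_one {f g : ℝ → ℝ} {t : ℝ}
    (hf : DifferentiableAt ℝ f t) (hg : DifferentiableAt ℝ g t) (hg0 : g t ≠ 0)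
    (hW : deriv f t * g t - f t * deriv g t = 1) :
    HasDerivAt (fun x => f x / g x) (g t ^ 2)⁻¹ t := by
  have h := hf.hasDerivAt.fun_div hg.hasDerivAt hg0
  rwa [hW, one_div] at h

lemma hasDerivAt_inv_sq {g : ℝ → ℝ} {x : ℝ} (hg : DifferentiableAt ℝ g x) (hg0 : g x ≠ 0) :
    HasDerivAt (fun y => (g y ^ 2)⁻¹) (-2 * deriv g x / g x ^ 3) x := by
  refine ((hg.hasDerivAt.fun_pow 2).fun_inv (pow_ne_zero 2 hg0)).congr_deriv ?_
  field_simp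
  ring

lemma hasDerivAt_deriv_div_cube {g : ℝ → ℝ} {x : ℝ} (hg : DifferentiableAt ℝ g x)
    (hg' : DifferentiableAt ℝ (deriv g) x) (hg0 : g x ≠ 0) :
    HasDerivAt (fun y => -2 * deriv g y / g y ^ 3)
      (-2 * deriv (deriv g) x / g x ^ 3 + 6 * deriv g x ^ 2 / g x ^ 4) x := by
  refine ((hg'.hasDerivAt.const_mul (-2)).fun_div (hg.hasDerivAt.fun_pow 3)
    (pow_ne_zero 3 hg0)).congr_deriv ?_
  field_simp
  ring

theorem schwarzian_eq_of_deriv_eventuallyEq_inv_sq {u g : ℝ → ℝ} {t : ℝ}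
    (hg : ∀ᶠ x in 𝓝 t, DifferentiableAt ℝ g x ∧ g x ≠ 0)
    (hg' : DifferentiableAt ℝ (deriv g) t)
    (hu : deriv u =ᶠ[𝓝 t] fun x => (g x ^ 2)⁻¹) :
    DifferentiableAt ℝ (deriv u) t ∧ DifferentiableAt ℝ (deriv (deriv u)) t ∧
      schwarzian u t = -2 * deriv (deriv g) t / g t := by
  obtain ⟨hgt, hgt0⟩ := hg.self_of_nhds
  have hu₂ : deriv (deriv u) =ᶠ[𝓝 t] fun x => -2 * deriv g x / g x ^ 3 :=
    hu.deriv.trans <| hg.mono fun x ⟨hgx, hgx0⟩ => (hasDerivAt_inv_sq hgx hgx0).deriv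
  have hu₃ := hasDerivAt_deriv_div_cube hgt hg' hgt0
  refine ⟨hu.differentiableAt_iff.2 (hasDerivAt_inv_sq hgt hgt0).differentiableAt,
    hu₂.differentiableAt_iff.2 hu₃.differentiableAt, ?_⟩
  rw [schwarzian, hu.eq_of_nhds, hu₂.eq_of_nhds, hu₂.deriv_eq, hu₃.deriv]
  field_simp
  ring

theorem schwarz_reconstruction_general
    (F β δ u : ℝ → ℝ) (a b : ℝ)
    (hβ1 : ∀ t ∈ Set.Ioo a b, DifferentiableAt ℝ β t)
    (hδ1 : ∀ t ∈ Set.Ioo a b, DifferentiableAt ℝ δ t)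
    (hδ2 : ∀ t ∈ Set.Ioo a b, DifferentiableAt ℝ (deriv δ) t)
    (hδ3 : ∀ t ∈ Set.Ioo a b, deriv (deriv δ) t = -(F t / 2) * δ t)
    (hW : ∀ t ∈ Set.Ioo a b, deriv β t * δ t - β t * deriv δ t = 1)
    (hδ0 : ∀ t ∈ Set.Ioo a b, δ t ≠ 0)
    (hu : ∀ s, u s = β s / δ s) :
    ∀ t ∈ Set.Ioo a b,
      DifferentiableAt ℝ u t ∧
      DifferentiableAt ℝ (deriv u) t ∧
      DifferentiableAt ℝ (deriv (deriv u)) t ∧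
      deriv u t = 1 / (δ t) ^ 2 ∧
      0 < deriv u t ∧
      deriv (deriv (deriv u)) t / deriv u t
        - (3 / 2) * (deriv (deriv u) t / deriv u t) ^ 2 = F t := by
  intro t ht
  have hu' : ∀ s ∈ Set.Ioo a b, HasDerivAt u (δ s ^ 2)⁻¹ s := fun s hs => by
    rw [funext hu]
    exact hasDerivAt_div_of_wronskian_eq_one (hβ1 s hs) (hδ1 s hs) (hδ0 s hs) (hW s hs)
  have hnhds : ∀ᶠ s in 𝓝 t, s ∈ Set.Ioo a b := isOpen_Ioo.mem_nhds ht
  obtain ⟨hu₁, hu₂, hS⟩ := schwarzian_eq_of_deriv_eventuallyEq_inv_sq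
    (hnhds.mono fun s hs => ⟨hδ1 s hs, hδ0 s hs⟩) (hδ2 t ht)
    (hnhds.mono fun s hs => (hu' s hs).deriv)
  have hδt := hδ0 t ht
  refine ⟨(hu' t ht).differentiableAt, hu₁, hu₂, by rw [(hu' t ht).deriv, one_div], ?_, ?_⟩
  · rw [(hu' t ht).deriv]
    positivity
  · rw [← schwarzian, hS, hδ3 t ht]
    field_simp

/-- Reconstruction of the solution of Schwarz' equation from the left moving frame:
`u = β/δ` solves `S[u] = F`. -/
theorem schwarz_reconstruction
    (F β δ u : ℝ → ℝ) (a b : ℝ)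
    (hF : Continuous F)
    (hβ1 : ∀ t ∈ Set.Ioo a b, DifferentiableAt ℝ β t)
    (hβ2 : ∀ t ∈ Set.Ioo a b, DifferentiableAt ℝ (deriv β) t)
    (hβ3 : ∀ t ∈ Set.Ioo a b, deriv (deriv β) t = -(F t / 2) * β t)
    (hδ1 : ∀ t ∈ Set.Ioo a b, DifferentiableAt ℝ δ t)
    (hδ2 : ∀ t ∈ Set.Ioo a b, DifferentiableAt ℝ (deriv δ) t)
    (hδ3 : ∀ t ∈ Set.Ioo a b, deriv (deriv δ) t = -(F t / 2) * δ t)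
    (hW : ∀ t ∈ Set.Ioo a b, deriv β t * δ t - β t * deriv δ t = 1)
    (hδ0 : ∀ t ∈ Set.Ioo a b, δ t ≠ 0)
    (hu : ∀ s, u s = β s / δ s) :
    ∀ t ∈ Set.Ioo a b,
      DifferentiableAt ℝ u t ∧
      DifferentiableAt ℝ (deriv u) t ∧
      DifferentiableAt ℝ (deriv (deriv u)) t ∧
      deriv u t = 1 / (δ t) ^ 2 ∧
      0 < deriv u t ∧
      deriv (deriv (deriv u)) t / deriv u t
        - (3 / 2) * (deriv (deriv u) t / deriv u t) ^ 2 = F t :=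
  schwarz_reconstruction_general F β δ u a b hβ1 hδ1 hδ2 hδ3 hW hδ0 hu
end

section
/- Let ε ∈ ℝ and let u : ℝ → ℝ be differentiable and satisfy the logistic equation u'(t) = u(t)·(1 − u(t)) for all t in an open interval J, and suppose 1 + ε·u(t)·e^{−t} ≠ 0 on J. Then the function U(t) = u(t)/(1 + ε·u(t)·e^{−t}) is differentiable and satisfies U'(t) = U(t)·(1 − U(t)) on J. (The logistic equation admits the one-parameter symmetry group T = t, U = u/(1 + ε u e^{−t}).) -/
/-!
With `D = 1 + ε u e^{-t}` one finds `D' = ε e^{-t} (u' - u) = -ε u² e^{-t} = u (1 - D)`.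
Any such `D` turns a logistic solution `u` into another one `u / D`, by the quotient rule:
`(u' D - u D') / D² = (u D - u²) / D²`.
-/

open Real

theorem HasDerivAt.div_logistic {u D : ℝ → ℝ} {t : ℝ}
    (hu : HasDerivAt u (u t * (1 - u t)) t) (hD : HasDerivAt D (u t * (1 - D t)) t)
    (hD0 : D t ≠ 0) :
    HasDerivAt (fun s => u s / D s) (u t / D t * (1 - u t / D t)) t := by
  refine (hu.div hD hD0).congr_deriv ?_
  field_simp
  ring

theorem hasDerivAt_one_add_mul_exp_neg {u : ℝ → ℝ} {t : ℝ} (ε : ℝ)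
    (hu : HasDerivAt u (u t * (1 - u t)) t) :
    HasDerivAt (fun s => 1 + ε * u s * exp (-s)) (u t * (1 - (1 + ε * u t * exp (-t)))) t := by
  refine (((hu.const_mul ε).mul (hasDerivAt_neg t).exp).const_add 1).congr_deriv ?_
  ring

/-- The logistic equation admits the one-parameter symmetry group
`T = t`, `U = u/(1 + ε u e^{−t})`. -/
theorem logistic_symmetry
    (ε a b : ℝ) (u U : ℝ → ℝ)
    (hu : ∀ t ∈ Set.Ioo a b, HasDerivAt u (u t * (1 - u t)) t)
    (hden : ∀ t ∈ Set.Ioo a b, 1 + ε * u t * Real.exp (-t) ≠ 0)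
    (hU : ∀ t, U t = u t / (1 + ε * u t * Real.exp (-t))) :
    ∀ t ∈ Set.Ioo a b, HasDerivAt U (U t * (1 - U t)) t := by
  intro t ht
  rw [funext hU]
  exact (hu t ht).div_logistic (hasDerivAt_one_add_mul_exp_neg ε (hu t ht)) (hden t ht)
end

section
/- Let a > 0, let t₀ > 0 and u₀, u_t⁰ ∈ ℝ, and let α, β : (0,∞) → ℝ be differentiable with α'(t) = sin(t^a)·cos(t) and β'(t) = −sin(t^a)·sin(t) for all t > 0, and α(t₀) = u₀·sin(t₀) + u_t⁰·cos(t₀), β(t₀) = u₀·cos(t₀) − u_t⁰·sin(t₀). Then u(t) = α(t)·sin(t) + β(t)·cos(t) is twice differentiable on (0,∞) and satisfies u''(t) + u(t) = sin(t^a) for all t > 0, with u(t₀) = u₀ and u'(t₀) = u_t⁰. (Reconstruction of the solution of the driven harmonic oscillator from the left moving frame.) -/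
/-! Variation of constants: because `α' sin t + β' cos t = 0` by the reconstruction equations,
`u' = α cos - β sin`, and differentiating once more gives `u'' = sin (t ^ a) - u`.
The initial values of `(α, β)` are the rotation of `(u₀, ut₀)` by `t₀`, which
`u = α sin + β cos` and `u' = α cos - β sin` undo. -/

open Real

section VariationOfConstants

variable {α β f : ℝ → ℝ}

theorem hasDerivAt_mul_sin_add_mul_cos {t : ℝ}
    (hα : HasDerivAt α (f t * cos t) t) (hβ : HasDerivAt β (-f t * sin t) t) :
    HasDerivAt (fun s => α s * sin s + β s * cos s) (α t * cos t - β t * sin t) t :=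
  ((hα.mul (hasDerivAt_sin t)).add (hβ.mul (hasDerivAt_cos t))).congr_deriv (by ring)

theorem hasDerivAt_mul_cos_sub_mul_sin {t : ℝ}
    (hα : HasDerivAt α (f t * cos t) t) (hβ : HasDerivAt β (-f t * sin t) t) :
    HasDerivAt (fun s => α s * cos s - β s * sin s)
      (f t - (α t * sin t + β t * cos t)) t :=
  ((hα.mul (hasDerivAt_cos t)).sub (hβ.mul (hasDerivAt_sin t))).congr_deriv
    (by linear_combination f t * sin_sq_add_cos_sq t)

theorem hasDerivAt_deriv_mul_sin_add_mul_cos {s : Set ℝ} (hs : IsOpen s)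
    (hα : ∀ t ∈ s, HasDerivAt α (f t * cos t) t)
    (hβ : ∀ t ∈ s, HasDerivAt β (-f t * sin t) t) {t : ℝ} (ht : t ∈ s) :
    HasDerivAt (deriv fun s => α s * sin s + β s * cos s)
      (f t - (α t * sin t + β t * cos t)) t := by
  have hderiv : (deriv fun s => α s * sin s + β s * cos s) =ᶠ[nhds t]
      fun s => α s * cos s - β s * sin s := by
    filter_upwards [hs.mem_nhds ht] with r hr
    exact (hasDerivAt_mul_sin_add_mul_cos (hα r hr) (hβ r hr)).deriv
  exact (hasDerivAt_mul_cos_sub_mul_sin (hα t ht) (hβ t ht)).congr_of_eventuallyEq hderiv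

end VariationOfConstants

theorem driven_oscillator_reconstruction_general
    (a t₀ u₀ ut₀ : ℝ) (ht₀ : 0 < t₀)
    (α β u : ℝ → ℝ)
    (hα : ∀ t ∈ Set.Ioi (0 : ℝ), HasDerivAt α (Real.sin (t ^ a) * Real.cos t) t)
    (hβ : ∀ t ∈ Set.Ioi (0 : ℝ), HasDerivAt β (-Real.sin (t ^ a) * Real.sin t) t)
    (hα0 : α t₀ = u₀ * Real.sin t₀ + ut₀ * Real.cos t₀)
    (hβ0 : β t₀ = u₀ * Real.cos t₀ - ut₀ * Real.sin t₀)
    (hu : ∀ t, u t = α t * Real.sin t + β t * Real.cos t) :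
    (∀ t ∈ Set.Ioi (0 : ℝ),
      DifferentiableAt ℝ u t ∧
      DifferentiableAt ℝ (deriv u) t ∧
      deriv (deriv u) t + u t = Real.sin (t ^ a)) ∧
    u t₀ = u₀ ∧ deriv u t₀ = ut₀ := by
  obtain rfl : u = fun t => α t * sin t + β t * cos t := funext hu
  have hu' t (ht : t ∈ Set.Ioi (0 : ℝ)) :=
    hasDerivAt_mul_sin_add_mul_cos (f := fun t => sin (t ^ a)) (hα t ht) (hβ t ht)
  have hu'' t (ht : t ∈ Set.Ioi (0 : ℝ)) :=
    hasDerivAt_deriv_mul_sin_add_mul_cos (f := fun t => sin (t ^ a)) isOpen_Ioi hα hβ ht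
  refine ⟨fun t ht => ⟨(hu' t ht).differentiableAt, (hu'' t ht).differentiableAt, ?_⟩, ?_, ?_⟩
  · rw [(hu'' t ht).deriv]
    ring
  · simp only [hα0, hβ0]
    linear_combination u₀ * sin_sq_add_cos_sq t₀
  · rw [(hu' t₀ ht₀).deriv, hα0, hβ0]
    linear_combination ut₀ * sin_sq_add_cos_sq t₀

/-- Reconstruction of the solution of the driven harmonic oscillator
`u_tt + u = sin(t^a)` from the left moving frame `(α, β)`. -/
theorem driven_oscillator_reconstruction
    (a t₀ u₀ ut₀ : ℝ) (ha : 0 < a) (ht₀ : 0 < t₀)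
    (α β u : ℝ → ℝ)
    (hα : ∀ t ∈ Set.Ioi (0 : ℝ), HasDerivAt α (Real.sin (t ^ a) * Real.cos t) t)
    (hβ : ∀ t ∈ Set.Ioi (0 : ℝ), HasDerivAt β (-Real.sin (t ^ a) * Real.sin t) t)
    (hα0 : α t₀ = u₀ * Real.sin t₀ + ut₀ * Real.cos t₀)
    (hβ0 : β t₀ = u₀ * Real.cos t₀ - ut₀ * Real.sin t₀)
    (hu : ∀ t, u t = α t * Real.sin t + β t * Real.cos t) :
    (∀ t ∈ Set.Ioi (0 : ℝ),
      DifferentiableAt ℝ u t ∧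
      DifferentiableAt ℝ (deriv u) t ∧
      deriv (deriv u) t + u t = Real.sin (t ^ a)) ∧
    u t₀ = u₀ ∧ deriv u t₀ = ut₀ :=
  driven_oscillator_reconstruction_general a t₀ u₀ ut₀ ht₀ α β u hα hβ hα0 hβ0 hu
end

section
/- Let c ∈ ℝ and let I : ℝ → ℝ be differentiable with I'(H) + I(H) = e^{−H} − 1 for all H. Define the parametric curve x(H) = e^{H+c}·(1 − e^{−H}) and y(H) = e^{H+c}·(I(H) + (H+c)·(1 − e^{−H})). Then x'(H) = e^{H+c} > 0, y'(H) = (H+c)·e^{H+c}, so the slope p(H) = y'(H)/x'(H) equals H + c, and p'(H) = exp(−p(H))·x'(H) for all H. (The parametric curve (x(H), y(H)) obtained from the invariantized equation and the reconstruction equation ε_H = 1 is a solution of u_tt = exp(−u_t), since p'(H)/x'(H) is the second derivative d²y/dx² along the curve.) -/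
/-- The parametric curve obtained from the invariantized equation
`I_H + I = e^{−H} − 1` and the reconstruction equation `ε_H = 1` (so `ε = H + c`)
is a solution of `u_tt = exp(−u_t)`. -/
theorem exponential_equation_parametric_reconstruction
    (c : ℝ) (I x y : ℝ → ℝ)
    (hI : Differentiable ℝ I)
    (hIeq : ∀ H, deriv I H + I H = Real.exp (-H) - 1)
    (hx : ∀ H, x H = Real.exp (H + c) * (1 - Real.exp (-H)))
    (hy : ∀ H, y H = Real.exp (H + c) * (I H + (H + c) * (1 - Real.exp (-H)))) :
    ∀ H : ℝ,
      deriv x H = Real.exp (H + c) ∧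
      0 < deriv x H ∧
      deriv y H = (H + c) * Real.exp (H + c) ∧
      deriv y H / deriv x H = H + c ∧
      deriv (fun K => deriv y K / deriv x K) H
        = Real.exp (-(deriv y H / deriv x H)) * deriv x H := by
  have key : ∀ H : ℝ, Real.exp (H + c) * Real.exp (-H) = Real.exp c := by
    intro H
    rw [← Real.exp_add]
    ring_nf
  have he : ∀ H : ℝ, HasDerivAt (fun K : ℝ => Real.exp (K + c)) (Real.exp (H + c)) H := by
    intro H
    have := (((hasDerivAt_id H).add_const c).exp)
    simpa using this
  -- derivative of x
  have hxfun : x = fun K : ℝ => Real.exp (K + c) - Real.exp c := by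
    funext K
    rw [hx K, mul_sub, mul_one, key K]
  have hxd : ∀ H : ℝ, HasDerivAt x (Real.exp (H + c)) H := by
    intro H
    rw [hxfun]
    exact (he H).sub_const _
  -- derivative of y
  have hyfun : y = fun K : ℝ => Real.exp (K + c) * I K
      + (K + c) * (Real.exp (K + c) - Real.exp c) := by
    funext K
    rw [hy K]
    have h := key K
    linear_combination (-(K + c)) * h
  have hyd : ∀ H : ℝ, HasDerivAt y ((H + c) * Real.exp (H + c)) H := by
    intro H
    have h1 : HasDerivAt (fun K : ℝ => Real.exp (K + c) * I K
        + (K + c) * (Real.exp (K + c) - Real.exp c))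
        ((Real.exp (H + c) * I H + Real.exp (H + c) * deriv I H)
          + (1 * (Real.exp (H + c) - Real.exp c) + (H + c) * Real.exp (H + c))) H := by
      exact ((he H).mul (hI H).hasDerivAt).add
        (((hasDerivAt_id H).add_const c).mul ((he H).sub_const _))
    rw [hyfun]
    convert h1 using 1
    have h2 := hIeq H
    have h3 := key H
    linear_combination (-Real.exp (H + c)) * h2 - h3
  intro H
  have hx' : deriv x H = Real.exp (H + c) := (hxd H).deriv
  have hy' : deriv y H = (H + c) * Real.exp (H + c) := (hyd H).deriv
  have hpos : (0 : ℝ) < Real.exp (H + c) := Real.exp_pos _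
  have hslope : ∀ K : ℝ, deriv y K / deriv x K = K + c := by
    intro K
    rw [(hxd K).deriv, (hyd K).deriv]
    field_simp
  refine ⟨hx', by rw [hx']; exact hpos, hy', hslope H, ?_⟩
  have hfun : (fun K : ℝ => deriv y K / deriv x K) = fun K : ℝ => K + c := by
    funext K; exact hslope K
  rw [hfun, hslope H, hx']
  have : deriv (fun K : ℝ => K + c) H = 1 := by
    simp
  rw [this, ← Real.exp_add, show -(H + c) + (H + c) = 0 by ring, Real.exp_zero]
end
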